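/- arXiv:0903.4539 — 2 statements merged into one kernel-verified Lean document; each statement's English description precedes it below -/
import Mathlib

section
/- For every natural number q ≥ 2, the derivatives at s = −1 of the Hurwitz zeta function at rational points satisfy Σ_{r=1}^{q−1} ζ'(−1, r/q) = (1/q − 1) · ζ'(−1) − (1/(12q)) · log q, where ζ'(−1) is the derivative of the Riemann zeta function at −1. -/
/-!
For `Re s > 1`, splitting `∑ n⁻ˢ` by residues mod `q` shows that the Hurwitz zeta values at the
points `r / q`, `0 ≤ r < q`, add up to `q ^ s ζ(s)`; both sides are holomorphic on `ℂ ∖ {1}`, so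
the identity persists there. Dropping the term `r = 0`, which is `ζ(s)`, leaves
`(q ^ s - 1) ζ(s)`, and differentiating at `s = -1` with `ζ(-1) = -1/12` gives the formula.
-/

open HurwitzZeta Complex

lemma eqOn_compl_one_of_forall_one_lt_re {f g : ℂ → ℂ}
    (hf : DifferentiableOn ℂ f {1}ᶜ) (hg : DifferentiableOn ℂ g {1}ᶜ)
    (hfg : ∀ s : ℂ, 1 < s.re → f s = g s) : Set.EqOn f g {1}ᶜ := by
  refine (hf.analyticOnNhd isOpen_compl_singleton).eqOn_of_preconnected_of_eventuallyEq
    (hg.analyticOnNhd isOpen_compl_singleton)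
    (isConnected_compl_singleton_of_one_lt_rank (by simp) _).isPreconnected
    (z₀ := 2) (by norm_num) ?_
  filter_upwards [(isOpen_lt continuous_const continuous_re).mem_nhds
    (show (1 : ℝ) < (2 : ℂ).re by norm_num)] with s hs
  exact hfg s hs

namespace ZMod

variable {N : ℕ} [NeZero N]

lemma LFunction_one_eq_riemannZeta {s : ℂ} (hs : s ≠ 1) :
    LFunction (1 : ZMod N → ℂ) s = riemannZeta s := by
  refine eqOn_compl_one_of_forall_one_lt_re (fun s hs => ?_) (fun s hs => ?_) (fun s hs => ?_) hs
  · exact (differentiableAt_LFunction 1 s (.inl hs)).differentiableWithinAt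
  · exact (differentiableAt_riemannZeta hs).differentiableWithinAt
  · rw [LFunction_eq_LSeries 1 hs]
    exact LSeries_one_eq_riemannZeta hs

lemma sum_hurwitzZeta_toAddCircle {s : ℂ} (hs : s ≠ 1) :
    ∑ j : ZMod N, hurwitzZeta (toAddCircle j) s = N ^ s * riemannZeta s := by
  rw [← LFunction_one_eq_riemannZeta (N := N) hs, LFunction, ← mul_assoc,
    ← cpow_add _ _ (Nat.cast_ne_zero.mpr (NeZero.ne N))]
  simp

end ZMod

lemma sum_range_hurwitzZeta_div (q : ℕ) [NeZero q] {s : ℂ} (hs : s ≠ 1) :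
    ∑ r ∈ Finset.range q, hurwitzZeta ((r / q : ℝ) : UnitAddCircle) s = q ^ s * riemannZeta s := by
  obtain ⟨n, rfl⟩ : ∃ n, q = n + 1 := Nat.exists_eq_succ_of_ne_zero (NeZero.ne q)
  rw [← ZMod.sum_hurwitzZeta_toAddCircle hs, ← Fin.sum_univ_eq_sum_range]
  simp only [ZMod.toAddCircle_apply]
  -- `ZMod (n + 1)` is `Fin (n + 1)` by definition
  rfl

lemma sum_Ico_hurwitzZeta_div (q : ℕ) [NeZero q] {s : ℂ} (hs : s ≠ 1) :
    ∑ r ∈ Finset.Ico 1 q, hurwitzZeta ((r / q : ℝ) : UnitAddCircle) s =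
      (q ^ s - 1) * riemannZeta s := by
  have h := sum_range_hurwitzZeta_div q hs
  rw [Finset.range_eq_Ico, Finset.sum_eq_sum_Ico_succ_bot (Nat.pos_of_neZero q)] at h
  simp only [CharP.cast_eq_zero, zero_div, QuotientAddGroup.mk_zero, hurwitzZeta_zero] at h
  linear_combination h

lemma hasDerivAt_sum_Ico_hurwitzZeta_div (q : ℕ) [NeZero q] {s : ℂ} (hs : s ≠ 1) :
    HasDerivAt (fun s => ∑ r ∈ Finset.Ico 1 q, hurwitzZeta ((r / q : ℝ) : UnitAddCircle) s)
      (q ^ s * log q * riemannZeta s + (q ^ s - 1) * deriv riemannZeta s) s := by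
  have hζ := (differentiableAt_riemannZeta hs).hasDerivAt
  have hpow := (hasStrictDerivAt_const_cpow (x := (q : ℂ)) (y := s) (.inl (NeZero.ne _))).hasDerivAt
  refine ((hpow.sub_const 1).mul hζ).congr_of_eventuallyEq ?_
  filter_upwards [isOpen_compl_singleton.mem_nhds hs] with t ht
  exact sum_Ico_hurwitzZeta_div q ht

lemma riemannZeta_neg_one : riemannZeta (-1) = -1 / 12 := by
  rw [show (-1 : ℂ) = -(1 : ℕ) by simp, riemannZeta_neg_nat_eq_bernoulli]
  norm_num [bernoulli]

theorem hurwitzZeta_deriv_neg_one_sum (q : ℕ) (hq : 2 ≤ q) :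
    ∑ r ∈ Finset.Ico 1 q,
        deriv (fun s => hurwitzZeta (((r : ℝ) / q : ℝ) : UnitAddCircle) s) (-1) =
      ((1 / q : ℂ) - 1) * deriv riemannZeta (-1)
        - (1 / (12 * q) : ℂ) * (Real.log q : ℂ) := by
  have : NeZero q := ⟨by omega⟩
  have hne : (-1 : ℂ) ≠ 1 := by norm_num
  rw [← deriv_fun_sum fun r _ => differentiableAt_hurwitzZeta _ hne,
    (hasDerivAt_sum_Ico_hurwitzZeta_div q hne).deriv, riemannZeta_neg_one, cpow_neg_one,
    ← natCast_log]
  field_simp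
  ring
end

section
/- (Multiplication formula at s = −1) For every natural number q ≥ 1 and every real number x with 0 < x ≤ 1, ζ'(−1, x) − (1/2) · B₂(x) · log q = q · Σ_{r=0}^{q−1} ζ'(−1, (r + x)/q), where B₂(x) = x² − x + 1/6 is the second Bernoulli polynomial. -/
/-!
For `1 < re s`, splitting the Dirichlet series `∑ (n + x)^{-s}` along the residue classes
`n = r + q m` gives `∑_{r<q} ζ(s, (r + x)/q) = q^s ζ(s, x)`, and by analytic continuation this
holds for all `s ≠ 1`. Differentiating at `s = -1` and inserting
`ζ(-1, x) = -B₂(x)/2` yields the formula.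
-/

open HurwitzZeta Complex Finset

lemma Nat.tsum_eq_sum_range_tsum_add_mul {R : Type*} [AddCommGroup R] [UniformSpace R]
    [IsUniformAddGroup R] [CompleteSpace R] [T0Space R] {f : ℕ → R} (hf : Summable f)
    (N : ℕ) [NeZero N] :
    ∑' n, f n = ∑ r ∈ range N, ∑' m, f (r + N * m) := by
  rw [Nat.sumByResidueClasses hf N]
  exact Finset.sum_nbij' (fun j => j.val) (fun r => (r : ZMod N))
    (fun j _ => mem_range.mpr j.val_lt) (fun _ _ => mem_univ _)
    (fun j _ => ZMod.natCast_zmod_val j) (fun r hr => ZMod.val_natCast_of_lt (mem_range.mp hr))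
    (fun _ _ => rfl)

lemma ofReal_cpow_neg_mul_one_div_add_div_cpow {q a b : ℝ} (hq : 0 < q) (ha : 0 ≤ a)
    (hb : 0 ≤ b) (s : ℂ) :
    (q : ℂ) ^ (-s) * (1 / ((b + a / q : ℝ) : ℂ) ^ s) = 1 / ((q * b + a : ℝ) : ℂ) ^ s := by
  have hsum : b + a / q = (q * b + a) / q := by field_simp
  have hqs : (q : ℂ) ^ s ≠ 0 := by simp [cpow_eq_zero_iff, hq.ne']
  rw [hsum, ofReal_div, div_cpow_ofReal_nonneg (by positivity) hq.le, cpow_neg]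
  field_simp

lemma hasSum_hurwitzZeta_add_div_of_one_lt_re {q : ℕ} {r : ℕ} (hr : r < q) {x : ℝ}
    (hx : x ∈ Set.Icc (0 : ℝ) 1) {s : ℂ} (hs : 1 < s.re) :
    HasSum (fun m : ℕ => 1 / (((r + q * m : ℕ) : ℂ) + x) ^ s)
      ((q : ℂ) ^ (-s) * hurwitzZeta ((((r : ℝ) + x) / q : ℝ) : UnitAddCircle) s) := by
  obtain ⟨hx0, hx1⟩ := hx
  have hq : (0 : ℝ) < q := by exact_mod_cast (Nat.zero_le r).trans_lt hr
  have hrx : ((r : ℝ) + x) / q ∈ Set.Icc (0 : ℝ) 1 := by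
    refine ⟨by positivity, (div_le_one hq).mpr ?_⟩
    have : (r : ℝ) + 1 ≤ q := by exact_mod_cast hr
    linarith
  refine ((hasSum_hurwitzZeta_of_one_lt_re hrx hs).mul_left ((q : ℂ) ^ (-s))).congr_fun
    fun m => ?_
  rw [← ofReal_natCast q, ← ofReal_natCast m, ← ofReal_add,
    ofReal_cpow_neg_mul_one_div_add_div_cpow hq (by positivity) m.cast_nonneg]
  push_cast
  ring_nf

lemma sum_range_hurwitzZeta_add_div_of_one_lt_re {q : ℕ} (hq : q ≠ 0) {x : ℝ}
    (hx : x ∈ Set.Icc (0 : ℝ) 1) {s : ℂ} (hs : 1 < s.re) :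
    ∑ r ∈ range q, hurwitzZeta ((((r : ℝ) + x) / q : ℝ) : UnitAddCircle) s
      = (q : ℂ) ^ s * hurwitzZeta (x : UnitAddCircle) s := by
  have : NeZero q := ⟨hq⟩
  have hζ := hasSum_hurwitzZeta_of_one_lt_re hx hs
  rw [← hζ.tsum_eq, Nat.tsum_eq_sum_range_tsum_add_mul hζ.summable q, mul_sum]
  refine sum_congr rfl fun r hr => ?_
  rw [(hasSum_hurwitzZeta_add_div_of_one_lt_re (mem_range.mp hr) hx hs).tsum_eq, ← mul_assoc,
    ← cpow_add _ _ (Nat.cast_ne_zero.mpr hq), add_neg_cancel, cpow_zero, one_mul]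

lemma sum_range_hurwitzZeta_add_div {q : ℕ} (hq : q ≠ 0) {x : ℝ}
    (hx : x ∈ Set.Icc (0 : ℝ) 1) {s : ℂ} (hs : s ≠ 1) :
    ∑ r ∈ range q, hurwitzZeta ((((r : ℝ) + x) / q : ℝ) : UnitAddCircle) s
      = (q : ℂ) ^ s * hurwitzZeta (x : UnitAddCircle) s := by
  have hU : IsPreconnected ({1}ᶜ : Set ℂ) :=
    (isConnected_compl_singleton_of_one_lt_rank (by simp) _).isPreconnected
  have hlhs : AnalyticOnNhd ℂ (fun s => ∑ r ∈ range q,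
      hurwitzZeta ((((r : ℝ) + x) / q : ℝ) : UnitAddCircle) s) {1}ᶜ :=
    DifferentiableOn.analyticOnNhd (fun u hu => (DifferentiableAt.fun_sum fun r _ =>
      differentiableAt_hurwitzZeta _ hu).differentiableWithinAt) isOpen_compl_singleton
  have hrhs : AnalyticOnNhd ℂ
      (fun s => (q : ℂ) ^ s * hurwitzZeta (x : UnitAddCircle) s) {1}ᶜ :=
    DifferentiableOn.analyticOnNhd (fun u hu => ((differentiableAt_id.const_cpow
      (Or.inl (Nat.cast_ne_zero.mpr hq))).mul (differentiableAt_hurwitzZeta _ hu)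
      ).differentiableWithinAt) isOpen_compl_singleton
  have h2 : ∀ᶠ z in nhds (2 : ℂ), 1 < z.re :=
    (continuous_re.isOpen_preimage _ isOpen_Ioi).mem_nhds (by simp)
  exact hlhs.eqOn_of_preconnected_of_eventuallyEq hrhs hU (by norm_num)
    (h2.mono fun z hz => sum_range_hurwitzZeta_add_div_of_one_lt_re hq hx hz) hs

lemma hurwitzZeta_neg_one {x : ℝ} (hx : x ∈ Set.Icc (0 : ℝ) 1) :
    hurwitzZeta (x : UnitAddCircle) (-1) = -((x : ℂ) ^ 2 - x + 1 / 6) / 2 := by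
  have h := hurwitzZeta_neg_nat one_ne_zero hx
  have hB : bernoulli 2 = 1 / 6 := by
    rw [bernoulli_eq_bernoulli'_of_ne_one (by norm_num), bernoulli'_two]
  push_cast at h
  rw [h]
  simp [Polynomial.bernoulli, sum_range_succ, hB]
  ring

lemma sum_range_deriv_hurwitzZeta_add_div {q : ℕ} (hq : q ≠ 0) {x : ℝ}
    (hx : x ∈ Set.Icc (0 : ℝ) 1) {s : ℂ} (hs : s ≠ 1) :
    ∑ r ∈ range q,
        deriv (fun s => hurwitzZeta ((((r : ℝ) + x) / q : ℝ) : UnitAddCircle) s) s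
      = (q : ℂ) ^ s * (Real.log q * hurwitzZeta (x : UnitAddCircle) s
          + deriv (fun s => hurwitzZeta (x : UnitAddCircle) s) s) := by
  have hmul : (fun s => ∑ r ∈ range q,
      hurwitzZeta ((((r : ℝ) + x) / q : ℝ) : UnitAddCircle) s)
      =ᶠ[nhds s] fun s => (q : ℂ) ^ s * hurwitzZeta (x : UnitAddCircle) s :=
    Filter.eventually_of_mem (isOpen_compl_singleton.mem_nhds hs) fun _ hz =>
      sum_range_hurwitzZeta_add_div hq hx hz
  have hcpow : HasDerivAt (fun s : ℂ => (q : ℂ) ^ s) ((q : ℂ) ^ s * Complex.log q * 1) s :=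
    (hasDerivAt_id s).const_cpow (Or.inl (Nat.cast_ne_zero.mpr hq))
  rw [← deriv_fun_sum fun r _ => differentiableAt_hurwitzZeta _ hs, hmul.deriv_eq,
    (hcpow.fun_mul (differentiableAt_hurwitzZeta _ hs).hasDerivAt).deriv, ← natCast_log]
  ring

theorem hurwitzZeta_deriv_neg_one_multiplication (q : ℕ) (hq : 1 ≤ q)
    (x : ℝ) (hx0 : 0 < x) (hx1 : x ≤ 1) :
    deriv (fun s => hurwitzZeta (x : UnitAddCircle) s) (-1)
        - (1/2 : ℂ) * ((x : ℂ) ^ 2 - (x : ℂ) + 1/6) * (Real.log q : ℂ) =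
      (q : ℂ) * ∑ r ∈ Finset.range q,
        deriv (fun s => hurwitzZeta ((((r : ℝ) + x) / q : ℝ) : UnitAddCircle) s) (-1) := by
  have hq0 : q ≠ 0 := by omega
  have hx : x ∈ Set.Icc (0 : ℝ) 1 := ⟨hx0.le, hx1⟩
  rw [sum_range_deriv_hurwitzZeta_add_div hq0 hx (by norm_num), hurwitzZeta_neg_one hx,
    cpow_neg_one]
  field_simp
  ring
end
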